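/- arXiv:1508.00778 — 2 statements merged into one kernel-verified Lean document; each statement's English description precedes it below -/
import Mathlib

section
/- Let S be a compact subset of a Busemann surface (𝒮,d). Then every point u ∈ S has the same eccentricity in conv(S) as in S, i.e., sup{ d(u,v) : v ∈ conv(S) } = sup{ d(u,v) : v ∈ S }. Moreover, diam(conv(S)) = diam(S). -/
open Metric Set

section Defs

variable {X : Type*} [MetricSpace X]

/-- `γ` is a geodesic parametrized by arclength on the interval `[0, l]`. -/
def IsGeodesicMap (γ : ℝ → X) (l : ℝ) : Prop :=
  ∀ s ∈ Set.Icc (0 : ℝ) l, ∀ t ∈ Set.Icc (0 : ℝ) l, dist (γ s) (γ t) = |s - t|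

/-- A geodesic metric space: every pair of points is joined by a geodesic. -/
def IsGeodesicSpace (X : Type*) [MetricSpace X] : Prop :=
  ∀ x y : X, ∃ γ : ℝ → X, IsGeodesicMap γ (dist x y) ∧ γ 0 = x ∧ γ (dist x y) = y

/-- A Busemann space: a geodesic metric space in which the distance between
any two (affinely reparametrized) geodesics is convex. -/
def IsBusemannSpace (X : Type*) [MetricSpace X] : Prop :=
  IsGeodesicSpace X ∧
    ∀ (γ γ' : ℝ → X) (l l' : ℝ), 0 ≤ l → 0 ≤ l' →
      IsGeodesicMap γ l → IsGeodesicMap γ' l' →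
        ∀ t ∈ Set.Icc (0 : ℝ) 1,
          dist (γ (t * l)) (γ' (t * l')) ≤
            (1 - t) * dist (γ 0) (γ' 0) + t * dist (γ l) (γ' l')

/-- A Busemann surface: a Busemann space homeomorphic to the Euclidean plane. -/
def IsBusemannSurface (X : Type*) [MetricSpace X] : Prop :=
  IsBusemannSpace X ∧ Nonempty (X ≃ₜ EuclideanSpace ℝ (Fin 2))

/-- The covering number `ρ_δ(S)`: the least number of closed balls of radius `δ`
(centered at arbitrary points of `X`) needed to cover `S`. -/
noncomputable def covNum (δ : ℝ) (S : Set X) : ℕ∞ :=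
  sInf {n : ℕ∞ | ∃ T : Set X, T.encard = n ∧ S ⊆ ⋃ x ∈ T, Metric.closedBall x δ}

/-- The packing number `ν_δ(S)`: the largest cardinality of a subset `P ⊆ S`
whose points are pairwise at distance `> 2δ`. -/
noncomputable def packNum (δ : ℝ) (S : Set X) : ℕ∞ :=
  sSup {n : ℕ∞ | ∃ P : Set X, P ⊆ S ∧ P.encard = n ∧
    P.Pairwise fun p q => 2 * δ < dist p q}

/-- The geodesic segment `[x,y]` in a (uniquely geodesic) metric space. -/
def seg (x y : X) : Set X := {z | dist x z + dist z y = dist x y}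

/-- A set is (geodesically) convex if it contains the segment between any two of its points. -/
def GConvex (C : Set X) : Prop := ∀ x ∈ C, ∀ y ∈ C, seg x y ⊆ C

/-- The (geodesic) convex hull of a set. -/
def gHull (Q : Set X) : Set X := ⋂₀ {C : Set X | GConvex C ∧ Q ⊆ C}

/-- The triangle `Δ(x,y,z)`: the convex hull of `{x,y,z}`. -/
def triangleG (x y z : X) : Set X := gHull {x, y, z}

/-- The perimeter `π(a,b,c)` of a triangle. -/
def perim (a b c : X) : ℝ := dist a b + dist b c + dist c a

/-- Three points are collinear if one lies on the geodesic segment between the other two. -/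
def CollinearPts (a b c : X) : Prop := b ∈ seg a c ∨ a ∈ seg b c ∨ c ∈ seg a b

/-- A geodesic line: the image of an isometric embedding of `ℝ`. -/
def IsGeodesicLine (L : Set X) : Prop := ∃ γ : ℝ → X, Isometry γ ∧ L = Set.range γ

/-- A closed halfplane determined by the line `L`: the union of `L` with a
connected component of its complement. -/
def IsHalfplane (L H : Set X) : Prop :=
  ∃ p, p ∉ L ∧ H = connectedComponentIn Lᶜ p ∪ L

/-- The line `L` separates `A` from `B`: they lie in different closed halfplanes of `L`. -/
def LineSep (L A B : Set X) : Prop :=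
  ∃ H₁ H₂ : Set X, IsHalfplane L H₁ ∧ IsHalfplane L H₂ ∧ H₁ ≠ H₂ ∧ A ⊆ H₁ ∧ B ⊆ H₂

/-- The shade `Sh_u(x,y)` of the segment `[x,y]` with respect to `u`. -/
def Shade (u x y : X) : Set X :=
  {p | (seg u p ∩ seg x y).Nonempty ∧
    ∃ L : Set X, IsGeodesicLine L ∧ u ∈ L ∧ p ∈ L ∧ LineSep L {x} {y}}

/-- The shade `St_u(x,y,z)` of the triangle `Δ(x,y,z)` with respect to `u`. -/
def TriShade (u x y z : X) : Set X := Shade u x y ∪ Shade u y z ∪ Shade u z x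

end Defs

/-!
Closed balls are convex in a Busemann space: a point `z` of `seg x y` lies on the geodesic from
`x` to `y` obtained by concatenating geodesics `x → z → y`, and comparing that geodesic with the
constant geodesic at the centre bounds `dist z c` by a convex combination of `dist x c` and
`dist y c`. Hence `gHull S` lies in every closed ball containing `S`. Balls centred at `u` give the
eccentricity; balls centred at points of `S`, and then at points of `gHull S`, give the diameter.
-/

theorem csSup_eq_csSup_of_upperBounds_eq {α : Type*} [ConditionallyCompleteLinearOrder α]
    [NoBotOrder α] {s t : Set α} (h : upperBounds s = upperBounds t) : sSup s = sSup t := by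
  have sSup_eq_sSup_empty : ∀ {s : Set α}, ¬(s.Nonempty ∧ BddAbove s) → sSup s = sSup ∅ := by
    intro s hs
    rcases s.eq_empty_or_nonempty with rfl | hne
    · rfl
    · exact ConditionallyCompleteLinearOrder.csSup_of_not_bddAbove s fun hb => hs ⟨hne, hb⟩
  by_cases hs : s.Nonempty ∧ BddAbove s
  · have ht := (isLUB_congr h).1 (isLUB_csSup hs.1 hs.2)
    exact (ht.csSup_eq ht.nonempty).symm
  · by_cases ht : t.Nonempty ∧ BddAbove t
    · have hs' := (isLUB_congr h).2 (isLUB_csSup ht.1 ht.2)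
      exact absurd ⟨hs'.nonempty, hs'.bddAbove⟩ hs
    · rw [sSup_eq_sSup_empty hs, sSup_eq_sSup_empty ht]

section BusemannSpace

variable {X : Type*} [MetricSpace X]

theorem IsGeodesicMap.of_dist_le {γ : ℝ → X} {l : ℝ}
    (hγ : ∀ s ∈ Icc 0 l, ∀ t ∈ Icc 0 l, dist (γ s) (γ t) ≤ |s - t|)
    (hl : dist (γ 0) (γ l) = l) : IsGeodesicMap γ l := by
  intro s hs t ht
  wlog hst : s ≤ t generalizing s t
  · rw [dist_comm, abs_sub_comm]
    exact this t ht s hs (le_of_not_ge hst)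
  have h0 : (0 : ℝ) ∈ Icc 0 l := ⟨le_rfl, hs.1.trans hs.2⟩
  have h0s := hγ 0 h0 s hs
  have hst' := hγ s hs t ht
  have htl := hγ t ht l ⟨h0.2, le_rfl⟩
  have hlen := hl ▸ dist_triangle4 (γ 0) (γ s) (γ t) (γ l)
  rw [abs_of_nonpos (by linarith [hs.1])] at h0s
  rw [abs_of_nonpos (by linarith [ht.2])] at htl
  rw [abs_of_nonpos (by linarith)] at hst' ⊢
  linarith

theorem IsGeodesicMap.exists_concat {γ₁ γ₂ : ℝ → X} {a b : ℝ} (ha : 0 ≤ a) (hb : 0 ≤ b)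
    (h₁ : IsGeodesicMap γ₁ a) (h₂ : IsGeodesicMap γ₂ b) (hjoin : γ₁ a = γ₂ 0)
    (hab : dist (γ₁ 0) (γ₂ b) = a + b) :
    ∃ γ : ℝ → X, IsGeodesicMap γ (a + b) ∧ (∀ s ≤ a, γ s = γ₁ s) ∧
      ∀ s, a ≤ s → γ s = γ₂ (s - a) := by
  set γ : ℝ → X := fun s => if s ≤ a then γ₁ s else γ₂ (s - a)
  have hγ₁ : ∀ s ≤ a, γ s = γ₁ s := fun s hs => if_pos hs
  have hγ₂ : ∀ s, a ≤ s → γ s = γ₂ (s - a) := by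
    intro s hs
    rcases hs.eq_or_lt with rfl | hs
    · rw [hγ₁ a le_rfl, sub_self, hjoin]
    · exact if_neg (not_le.2 hs)
  refine ⟨γ, ?_, hγ₁, hγ₂⟩
  refine IsGeodesicMap.of_dist_le (fun s hs t ht => ?_) ?_
  · wlog hst : s ≤ t generalizing s t
    · rw [dist_comm, abs_sub_comm]
      exact this t ht s hs (le_of_not_ge hst)
    rcases le_total t a with hta | hat
    · rw [hγ₁ s (hst.trans hta), hγ₁ t hta]
      exact (h₁ s ⟨hs.1, hst.trans hta⟩ t ⟨ht.1, hta⟩).le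
    rcases le_total a s with has | hsa
    · rw [hγ₂ s has, hγ₂ t hat, h₂ (s - a) ⟨by linarith, by linarith [hs.2]⟩ (t - a)
        ⟨by linarith, by linarith [ht.2]⟩, sub_sub_sub_cancel_right]
    · have hsa' := h₁ s ⟨hs.1, hsa⟩ a ⟨ha, le_rfl⟩
      have hat' := h₂ 0 ⟨le_rfl, hb⟩ (t - a) ⟨by linarith, by linarith [ht.2]⟩
      rw [abs_of_nonpos (by linarith)] at hsa' hat'
      rw [hγ₁ s hsa, hγ₂ t hat, abs_of_nonpos (by linarith)]
      calc dist (γ₁ s) (γ₂ (t - a)) ≤ dist (γ₁ s) (γ₁ a) + dist (γ₂ 0) (γ₂ (t - a)) :=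
            hjoin ▸ dist_triangle _ _ _
        _ = -(s - t) := by rw [hsa', hat']; ring
  · rw [hγ₁ 0 ha, hγ₂ (a + b) (by linarith), add_sub_cancel_left, hab]

theorem IsGeodesicSpace.exists_isGeodesicMap_of_mem_seg (hX : IsGeodesicSpace X) {x y z : X}
    (hz : z ∈ seg x y) :
    ∃ γ : ℝ → X, IsGeodesicMap γ (dist x y) ∧ γ 0 = x ∧ γ (dist x z) = z ∧ γ (dist x y) = y := by
  obtain ⟨γ₁, h₁, h₁x, h₁z⟩ := hX x z
  obtain ⟨γ₂, h₂, h₂z, h₂y⟩ := hX z y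
  have hxy : dist x z + dist z y = dist x y := hz
  obtain ⟨γ, hγ, hγ₁, hγ₂⟩ :=
    h₁.exists_concat dist_nonneg dist_nonneg h₂ (h₁z.trans h₂z.symm) (by rw [h₁x, h₂y, hxy])
  refine ⟨γ, hxy ▸ hγ, by rw [hγ₁ 0 dist_nonneg, h₁x], by rw [hγ₁ _ le_rfl, h₁z], ?_⟩
  rw [← hxy, hγ₂ _ (le_add_of_nonneg_right dist_nonneg), add_sub_cancel_left, h₂y]

theorem gConvex_closedBall (hX : IsBusemannSpace X) (c : X) (r : ℝ) :
    GConvex (closedBall c r) := by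
  intro x hx y hy z hz
  obtain ⟨γ, hγ, hγx, hγz, hγy⟩ := hX.1.exists_isGeodesicMap_of_mem_seg hz
  have hconst : IsGeodesicMap (fun _ => c) 0 := fun s hs t ht => by
    rw [dist_self, le_antisymm hs.2 hs.1, le_antisymm ht.2 ht.1, sub_self, abs_zero]
  have hzxy : dist x z ≤ dist x y := by
    rw [← (hz : dist x z + dist z y = dist x y)]
    exact le_add_of_nonneg_right dist_nonneg
  set t := dist x z / dist x y
  have ht : t ∈ Icc (0 : ℝ) 1 := ⟨by positivity, div_le_one_of_le₀ hzxy dist_nonneg⟩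
  have htz : t * dist x y = dist x z := by
    rcases eq_or_ne (dist x y) 0 with hxy | hxy
    · rw [hxy, mul_zero]
      exact (le_antisymm (hxy ▸ hzxy) dist_nonneg).symm
    · exact div_mul_cancel₀ _ hxy
  have hbus := hX.2 γ (fun _ => c) _ 0 dist_nonneg le_rfl hγ hconst t ht
  rw [htz, hγz, hγx, hγy] at hbus
  rw [mem_closedBall] at hx hy ⊢
  calc dist z c ≤ (1 - t) * dist x c + t * dist y c := hbus
    _ ≤ (1 - t) * r + t * r := by gcongr; linarith [ht.2]
    _ = r := by ring

theorem subset_gHull (S : Set X) : S ⊆ gHull S :=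
  fun _ hx => mem_sInter.2 fun _ hC => hC.2 hx

theorem gHull_subset {S C : Set X} (hC : GConvex C) (hSC : S ⊆ C) : gHull S ⊆ C :=
  sInter_subset_of_mem ⟨hC, hSC⟩

theorem gHull_subset_closedBall_iff (hX : IsBusemannSpace X) {S : Set X} {c : X} {r : ℝ} :
    gHull S ⊆ closedBall c r ↔ S ⊆ closedBall c r :=
  ⟨(subset_gHull S).trans, gHull_subset (gConvex_closedBall hX c r)⟩

theorem dist_le_of_mem_gHull (hX : IsBusemannSpace X) {S : Set X} {r : ℝ}
    (hS : ∀ x ∈ S, ∀ y ∈ S, dist x y ≤ r) : ∀ x ∈ gHull S, ∀ y ∈ gHull S, dist x y ≤ r := by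
  have hSHull : ∀ x ∈ S, gHull S ⊆ closedBall x r := fun x hx =>
    (gHull_subset_closedBall_iff hX).2 fun y hy => mem_closedBall'.2 (hS x hx y hy)
  intro x hx y hy
  exact mem_closedBall'.1
    ((gHull_subset_closedBall_iff hX).2 (fun z hz => mem_closedBall'.2 (hSHull z hz hx)) hy)

theorem isBounded_gHull_iff (hX : IsBusemannSpace X) {S : Set X} :
    Bornology.IsBounded (gHull S) ↔ Bornology.IsBounded S := by
  refine ⟨fun h => h.subset (subset_gHull S), fun h => ?_⟩
  obtain ⟨C, hC⟩ := isBounded_iff.1 h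
  exact isBounded_iff.2
    ⟨C, fun x hx y hy => dist_le_of_mem_gHull hX (fun x hx y hy => hC hx hy) x hx y hy⟩

theorem diam_gHull (hX : IsBusemannSpace X) (S : Set X) : diam (gHull S) = diam S := by
  by_cases hS : Bornology.IsBounded S
  · refine le_antisymm ?_ (diam_mono (subset_gHull S) ((isBounded_gHull_iff hX).2 hS))
    exact diam_le_of_forall_dist_le diam_nonneg
      (dist_le_of_mem_gHull hX fun x hx y hy => dist_le_diam_of_mem hS hx hy)
  · rw [diam_eq_zero_of_unbounded hS, diam_eq_zero_of_unbounded (mt (isBounded_gHull_iff hX).1 hS)]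

theorem upperBounds_image_dist_gHull (hX : IsBusemannSpace X) (u : X) (S : Set X) :
    upperBounds (dist u '' gHull S) = upperBounds (dist u '' S) := by
  ext r
  simpa only [mem_upperBounds, forall_mem_image, subset_def, mem_closedBall'] using
    gHull_subset_closedBall_iff hX (S := S) (c := u) (r := r)

end BusemannSpace

theorem eccentricity_and_diam_gHull_general {X : Type*} [MetricSpace X]
    (hX : IsBusemannSurface X) (S : Set X)
    (u : X) :
    sSup (dist u '' gHull S) = sSup (dist u '' S) ∧
      Metric.diam (gHull S) = Metric.diam S :=
  ⟨csSup_eq_csSup_of_upperBounds_eq (upperBounds_image_dist_gHull hX.1 u S), diam_gHull hX.1 S⟩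

/-- taking the convex hull preserves eccentricities and the diameter. -/
theorem eccentricity_and_diam_gHull {X : Type*} [MetricSpace X]
    (hX : IsBusemannSurface X) (S : Set X) (hS : IsCompact S)
    (u : X) (hu : u ∈ S) :
    sSup (dist u '' gHull S) = sSup (dist u '' S) ∧
      Metric.diam (gHull S) = Metric.diam S :=
  eccentricity_and_diam_gHull_general hX S u
end

section
/- Let (𝒮,d) be a Busemann surface, let δ > 0, and let x,y,z ∈ 𝒮 be a critical triplet: d(x,y) ≤ 2δ, d(y,z) ≤ 2δ, d(z,x) ≤ 2δ, and B_δ(x) ∩ B_δ(y) ∩ B_δ(z) = ∅. Set A_x := Δ(x,y,z) ∩ B_δ(y) ∩ B_δ(z), A_y := Δ(x,y,z) ∩ B_δ(x) ∩ B_δ(z), and A_z := Δ(x,y,z) ∩ B_δ(x) ∩ B_δ(y) (these sets are nonempty and compact). Suppose (x',y',z') ∈ A_x × A_y × A_z minimizes the perimeter π(x',y',z') = d(x',y')+d(y',z')+d(z',x') over A_x × A_y × A_z. Then (a) the points x',y',z' are not collinear (none lies on the geodesic segment between the other two), and (b) d(y,x') = d(z,x') = δ, d(x,y') = d(z,y')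 = δ, and d(x,z') = d(y,z') = δ. -/
open Metric Set

section Aux

variable {X : Type*} [MetricSpace X]

lemma const_geodesic (p : X) : IsGeodesicMap (fun _ => p) 0 := by
  intro s hs t ht
  have hs0 : s = 0 := le_antisymm hs.2 hs.1
  have ht0 : t = 0 := le_antisymm ht.2 ht.1
  simp [hs0, ht0]

lemma busemann_point (hB : IsBusemannSpace X) {γ : ℝ → X} {l : ℝ} (hl : 0 ≤ l)
    (hγ : IsGeodesicMap γ l) (p : X) {t : ℝ} (ht : t ∈ Set.Icc (0:ℝ) 1) :
    dist (γ (t * l)) p ≤ (1 - t) * dist (γ 0) p + t * dist (γ l) p := by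
  have h := hB.2 γ (fun _ => p) l 0 hl le_rfl hγ (const_geodesic p) t ht
  simpa using h

lemma seg_point_dist (hB : IsBusemannSpace X) {a b c : X} (hc : c ∈ seg a b) (p : X) :
    dist p c ≤ max (dist p a) (dist p b) := by
  have hc' : dist a c + dist c b = dist a b := hc
  rcases eq_or_ne (dist a b) 0 with h0 | h0
  · have hac : dist a c = 0 := by
      have h1 := dist_nonneg (x := a) (y := c)
      have h2 := dist_nonneg (x := c) (y := b)
      linarith [hc', h0.le]
    have : c = a := (dist_eq_zero.mp hac).symm
    rw [this]
    exact le_max_left _ _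
  · obtain ⟨γ₁, hγ₁, h10, h11⟩ := hB.1 a c
    obtain ⟨γ₂, hγ₂, h20, h21⟩ := hB.1 c b
    set l₁ := dist a c with hl₁def
    set l₂ := dist c b with hl₂def
    set l := dist a b with hldef
    have hl₁ : 0 ≤ l₁ := dist_nonneg
    have hl₂ : 0 ≤ l₂ := dist_nonneg
    have hlpos : 0 < l := lt_of_le_of_ne dist_nonneg (Ne.symm h0)
    set γ : ℝ → X := fun s => if s ≤ l₁ then γ₁ s else γ₂ (s - l₁) with hγdef
    have hγa : γ 0 = a := by
      simp only [hγdef, if_pos hl₁]; exact h10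
    have hγc : γ l₁ = c := by
      simp only [hγdef, if_pos le_rfl]; exact h11
    have hγb : γ l = b := by
      rcases le_or_gt l l₁ with h | h
      · have hll : l = l₁ := le_antisymm h (by linarith)
        have hcb : l₂ = 0 := by linarith
        have hcb' : c = b := by
          rw [← dist_eq_zero, ← hl₂def]; exact hcb
        rw [hll, hγc, hcb']
      · simp only [hγdef, if_neg (not_le.mpr h)]
        have : l - l₁ = l₂ := by linarith
        rw [this]; exact h21
    have key : ∀ s t : ℝ, s ∈ Set.Icc 0 l → t ∈ Set.Icc 0 l → s ≤ t →
        dist (γ s) (γ t) = t - s := by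
      intro s t hs ht hst
      rcases le_or_gt t l₁ with h1 | h1
      · have e1 : γ s = γ₁ s := if_pos (hst.trans h1)
        have e2 : γ t = γ₁ t := if_pos h1
        rw [e1, e2, hγ₁ s ⟨hs.1, hst.trans h1⟩ t ⟨ht.1, h1⟩, abs_of_nonpos (by linarith)]
        ring
      · rcases le_or_gt s l₁ with h2 | h2
        · have e1 : γ s = γ₁ s := if_pos h2
          have e2 : γ t = γ₂ (t - l₁) := if_neg (not_le.mpr h1)
          have htl₂ : t - l₁ ∈ Set.Icc 0 l₂ := ⟨by linarith, by linarith [ht.2]⟩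
          have d1 : dist (γ₁ s) c = l₁ - s := by
            have := hγ₁ s ⟨hs.1, h2⟩ l₁ ⟨hl₁, le_rfl⟩
            rw [h11] at this
            rw [this, abs_of_nonpos (by linarith)]; ring
          have d2 : dist c (γ₂ (t - l₁)) = t - l₁ := by
            have := hγ₂ 0 ⟨le_rfl, hl₂⟩ (t - l₁) htl₂
            rw [h20] at this
            rw [this, abs_of_nonpos (by linarith [htl₂.1])]; ring
          have d3 : dist (γ₂ (t - l₁)) b = l₂ - (t - l₁) := by
            have := hγ₂ (t - l₁) htl₂ l₂ ⟨hl₂, le_rfl⟩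
            rw [h21] at this
            rw [this, abs_of_nonpos (by linarith [htl₂.2])]; ring
          have da : dist a (γ₁ s) = s := by
            have := hγ₁ 0 ⟨le_rfl, hl₁⟩ s ⟨hs.1, h2⟩
            rw [h10] at this
            rw [this, abs_of_nonpos (by linarith [hs.1])]; ring
          have hub : dist (γ s) (γ t) ≤ t - s := by
            rw [e1, e2]
            calc dist (γ₁ s) (γ₂ (t - l₁)) ≤ dist (γ₁ s) c + dist c (γ₂ (t - l₁)) :=
                  dist_triangle _ _ _
              _ = t - s := by rw [d1, d2]; ring
          have hlb : t - s ≤ dist (γ s) (γ t) := by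
            have htri : dist a b ≤ dist a (γ₁ s) + dist (γ₁ s) (γ₂ (t - l₁)) +
                dist (γ₂ (t - l₁)) b := dist_triangle4 _ _ _ _
            rw [da, d3] at htri
            rw [e1, e2]
            have hsum : l₁ + l₂ = l := hc'
            linarith
          linarith
        · have e1 : γ s = γ₂ (s - l₁) := if_neg (not_le.mpr h2)
          have e2 : γ t = γ₂ (t - l₁) := if_neg (not_le.mpr h1)
          have hsum : l₁ + l₂ = l := hc'
          rw [e1, e2, hγ₂ (s - l₁) ⟨by linarith, by linarith [hs.2]⟩ (t - l₁)
            ⟨by linarith, by linarith [ht.2]⟩, abs_of_nonpos (by linarith)]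
          ring
    have hγgeo : IsGeodesicMap γ l := by
      intro s hs t ht
      rcases le_total s t with h | h
      · rw [key s t hs ht h, abs_of_nonpos (by linarith)]; ring
      · rw [dist_comm, key t s ht hs h, abs_of_nonneg (by linarith)]
    set t₀ := l₁ / l with ht₀def
    have ht₀ : t₀ ∈ Set.Icc (0:ℝ) 1 := by
      constructor
      · exact div_nonneg hl₁ hlpos.le
      · rw [div_le_one hlpos]; linarith
    have htl : t₀ * l = l₁ := div_mul_cancel₀ l₁ hlpos.ne'
    have hbp := busemann_point hB hlpos.le hγgeo p ht₀
    rw [htl, hγa, hγb, hγc] at hbp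
    have hmaxa : dist a p ≤ max (dist p a) (dist p b) := by
      rw [dist_comm]; exact le_max_left _ _
    have hmaxb : dist b p ≤ max (dist p a) (dist p b) := by
      rw [dist_comm]; exact le_max_right _ _
    have h1t : 0 ≤ 1 - t₀ := by linarith [ht₀.2]
    calc dist p c = dist c p := dist_comm _ _
      _ ≤ (1 - t₀) * dist a p + t₀ * dist b p := hbp
      _ ≤ (1 - t₀) * max (dist p a) (dist p b) + t₀ * max (dist p a) (dist p b) := by
          gcongr
      _ = max (dist p a) (dist p b) := by ring

lemma gconvex_gHull (Q : Set X) : GConvex (gHull Q) := by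
  intro a ha b hb w hw
  rw [gHull, Set.mem_sInter]
  intro C hC
  exact hC.1 a (Set.mem_sInter.mp ha C hC) b (Set.mem_sInter.mp hb C hC) hw

lemma move_lemma (hB : IsBusemannSpace X) {T : Set X} (hT : GConvex T)
    {δ : ℝ} {u v a b c : X}
    (haT : a ∈ T) (hcT : c ∈ T)
    (hua : dist u a < δ) (hva : dist v a ≤ δ) (hvc : dist v c ≤ δ)
    (hstrict : dist b c < dist b a + dist a c) :
    ∃ w ∈ T, dist u w ≤ δ ∧ dist v w ≤ δ ∧
      dist w b + dist w c < dist a b + dist a c := by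
  have hac : a ≠ c := by
    rintro rfl
    simp at hstrict
  have hl : 0 < dist a c := dist_pos.mpr hac
  obtain ⟨γ, hγ, hγ0, hγl⟩ := hB.1 a c
  set l := dist a c with hldef
  set ε := min l (δ - dist u a) with hεdef
  have hεpos : 0 < ε := lt_min hl (by linarith)
  have hεl : ε ≤ l := min_le_left _ _
  set t := ε / l with htdef
  have htpos : 0 < t := div_pos hεpos hl
  have ht1 : t ≤ 1 := by rw [div_le_one hl]; exact hεl
  have htl : t * l = ε := div_mul_cancel₀ ε hl.ne'
  have htlmem : t * l ∈ Set.Icc 0 l := by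
    rw [htl]; exact ⟨hεpos.le, hεl⟩
  have hdw1 : dist a (γ (t * l)) = t * l := by
    have := hγ 0 ⟨le_rfl, hl.le⟩ (t * l) htlmem
    rw [hγ0] at this
    rw [this, abs_of_nonpos (by linarith [htlmem.1])]; ring
  have hdw2 : dist (γ (t * l)) c = (1 - t) * l := by
    have := hγ (t * l) htlmem l ⟨hl.le, le_rfl⟩
    rw [hγl] at this
    rw [this, abs_of_nonpos (by linarith [htlmem.2])]; ring
  refine ⟨γ (t * l), ?_, ?_, ?_, ?_⟩
  · apply hT a haT c hcT
    show dist a (γ (t * l)) + dist (γ (t * l)) c = dist a c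
    rw [hdw1, hdw2]; ring
  · calc dist u (γ (t * l)) ≤ dist u a + dist a (γ (t * l)) := dist_triangle _ _ _
      _ = dist u a + ε := by rw [hdw1, htl]
      _ ≤ δ := by linarith [min_le_right l (δ - dist u a)]
  · have hbp := busemann_point hB hl.le hγ v ⟨htpos.le, ht1⟩
    rw [hγ0, hγl] at hbp
    have hva' : dist a v ≤ δ := by rw [dist_comm]; exact hva
    have hvc' : dist c v ≤ δ := by rw [dist_comm]; exact hvc
    calc dist v (γ (t * l)) = dist (γ (t * l)) v := dist_comm _ _
      _ ≤ (1 - t) * dist a v + t * dist c v := hbp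
      _ ≤ (1 - t) * δ + t * δ := by gcongr <;> linarith
      _ = δ := by ring
  · have hbp := busemann_point hB hl.le hγ b ⟨htpos.le, ht1⟩
    rw [hγ0, hγl] at hbp
    have e1 : dist a b = dist b a := dist_comm _ _
    have e2 : dist c b = dist b c := dist_comm _ _
    have e3 : dist (γ (t * l)) b = dist b (γ (t * l)) := dist_comm _ _
    have hq : 0 < t * (dist b a + l - dist b c) := mul_pos htpos (by linarith)
    nlinarith [hbp, hdw2]

end Aux

/-- properties of the minimum-perimeter triangle of a critical triplet. -/
theorem critical_triangle_properties {X : Type*} [MetricSpace X]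
    (hX : IsBusemannSurface X) (δ : ℝ) (hδ : 0 < δ) (x y z x' y' z' : X)
    (hxy : dist x y ≤ 2 * δ) (hyz : dist y z ≤ 2 * δ) (hzx : dist z x ≤ 2 * δ)
    (hcrit : Metric.closedBall x δ ∩ Metric.closedBall y δ ∩ Metric.closedBall z δ = ∅)
    (hx' : x' ∈ triangleG x y z ∩ Metric.closedBall y δ ∩ Metric.closedBall z δ)
    (hy' : y' ∈ triangleG x y z ∩ Metric.closedBall x δ ∩ Metric.closedBall z δ)
    (hz' : z' ∈ triangleG x y z ∩ Metric.closedBall x δ ∩ Metric.closedBall y δ)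
    (hmin : ∀ a ∈ triangleG x y z ∩ Metric.closedBall y δ ∩ Metric.closedBall z δ,
      ∀ b ∈ triangleG x y z ∩ Metric.closedBall x δ ∩ Metric.closedBall z δ,
      ∀ c ∈ triangleG x y z ∩ Metric.closedBall x δ ∩ Metric.closedBall y δ,
      perim x' y' z' ≤ perim a b c) :
    ¬ CollinearPts x' y' z' ∧
      dist y x' = δ ∧ dist z x' = δ ∧ dist x y' = δ ∧ dist z y' = δ ∧
      dist x z' = δ ∧ dist y z' = δ := by
  obtain ⟨hB, -⟩ := hX
  obtain ⟨⟨hx'T, hx'y⟩, hx'z⟩ := hx'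
  obtain ⟨⟨hy'T, hy'x⟩, hy'z⟩ := hy'
  obtain ⟨⟨hz'T, hz'x⟩, hz'y⟩ := hz'
  rw [Metric.mem_closedBall] at hx'y hx'z hy'x hy'z hz'x hz'y
  have hTconv : GConvex (triangleG x y z) := gconvex_gHull _
  -- no point is in all three balls
  have hball : ∀ w : X, dist w x ≤ δ → dist w y ≤ δ → dist w z ≤ δ → False := by
    intro w h1 h2 h3
    have hw : w ∈ (Metric.closedBall x δ ∩ Metric.closedBall y δ) ∩
        Metric.closedBall z δ :=
      ⟨⟨Metric.mem_closedBall.mpr h1, Metric.mem_closedBall.mpr h2⟩,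
        Metric.mem_closedBall.mpr h3⟩
    rw [hcrit] at hw
    exact hw
  -- non-degeneracy claims
  have Cx : ¬ (dist y' x' + dist x' z' = dist y' z') := by
    intro h
    have hseg : x' ∈ seg y' z' := h
    have hd := seg_point_dist hB hseg x
    have hd' : dist x x' ≤ δ := hd.trans (max_le (by rw [dist_comm]; exact hy'x)
      (by rw [dist_comm]; exact hz'x))
    exact hball x' (by rw [dist_comm]; exact hd') hx'y hx'z
  have Cy : ¬ (dist x' y' + dist y' z' = dist x' z') := by
    intro h
    have hseg : y' ∈ seg x' z' := h
    have hd := seg_point_dist hB hseg y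
    have hd' : dist y y' ≤ δ := hd.trans (max_le (by rw [dist_comm]; exact hx'y)
      (by rw [dist_comm]; exact hz'y))
    exact hball y' hy'x (by rw [dist_comm]; exact hd') hy'z
  have Cz : ¬ (dist x' z' + dist z' y' = dist x' y') := by
    intro h
    have hseg : z' ∈ seg x' y' := h
    have hd := seg_point_dist hB hseg z
    have hd' : dist z z' ≤ δ := hd.trans (max_le (by rw [dist_comm]; exact hx'z)
      (by rw [dist_comm]; exact hy'z))
    exact hball z' hz'x hz'y (by rw [dist_comm]; exact hd')
  -- convenient strict triangle inequalities
  have S1 : dist z' y' < dist z' x' + dist x' y' := by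
    refine lt_of_le_of_ne (dist_triangle _ _ _) fun h => Cx ?_
    rw [dist_comm z' y', dist_comm z' x', dist_comm x' y'] at h
    linarith
  have S2 : dist y' z' < dist y' x' + dist x' z' :=
    lt_of_le_of_ne (dist_triangle _ _ _) fun h => Cx h.symm
  have S3 : dist z' x' < dist z' y' + dist y' x' := by
    refine lt_of_le_of_ne (dist_triangle _ _ _) fun h => Cy ?_
    rw [dist_comm z' x', dist_comm z' y', dist_comm y' x'] at h
    linarith
  have S4 : dist x' z' < dist x' y' + dist y' z' :=
    lt_of_le_of_ne (dist_triangle _ _ _) fun h => Cy h.symm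
  have S5 : dist y' x' < dist y' z' + dist z' x' := by
    refine lt_of_le_of_ne (dist_triangle _ _ _) fun h => Cz ?_
    rw [dist_comm y' x', dist_comm y' z', dist_comm z' x'] at h
    linarith
  have S6 : dist x' y' < dist x' z' + dist z' y' :=
    lt_of_le_of_ne (dist_triangle _ _ _) fun h => Cz h.symm
  -- part (a)
  have hnc : ¬ CollinearPts x' y' z' := by
    rintro (h | h | h)
    · exact Cy h
    · exact Cx h
    · exact Cz h
  refine ⟨hnc, ?_, ?_, ?_, ?_, ?_, ?_⟩
  · -- dist y x' = δ
    refine le_antisymm (by rw [dist_comm]; exact hx'y) (le_of_not_gt fun h => ?_)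
    obtain ⟨w, hwT, hwu, hwv, hwlt⟩ :=
      move_lemma hB hTconv hx'T hy'T h (by rw [dist_comm]; exact hx'z) (by rw [dist_comm]; exact hy'z) S1
    have hm := hmin w ⟨⟨hwT, Metric.mem_closedBall.mpr (by rw [dist_comm]; exact hwu)⟩,
      Metric.mem_closedBall.mpr (by rw [dist_comm]; exact hwv)⟩
      y' ⟨⟨hy'T, Metric.mem_closedBall.mpr hy'x⟩, Metric.mem_closedBall.mpr hy'z⟩
      z' ⟨⟨hz'T, Metric.mem_closedBall.mpr hz'x⟩, Metric.mem_closedBall.mpr hz'y⟩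
    simp only [perim] at hm
    have e1 : dist z' w = dist w z' := dist_comm _ _
    have e2 : dist z' x' = dist x' z' := dist_comm _ _
    have e3 : dist w y' = dist y' w := dist_comm _ _
    linarith
  · -- dist z x' = δ
    refine le_antisymm (by rw [dist_comm]; exact hx'z) (le_of_not_gt fun h => ?_)
    obtain ⟨w, hwT, hwu, hwv, hwlt⟩ :=
      move_lemma hB hTconv hx'T hz'T h (by rw [dist_comm]; exact hx'y) (by rw [dist_comm]; exact hz'y) S2
    have hm := hmin w ⟨⟨hwT, Metric.mem_closedBall.mpr (by rw [dist_comm]; exact hwv)⟩,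
      Metric.mem_closedBall.mpr (by rw [dist_comm]; exact hwu)⟩
      y' ⟨⟨hy'T, Metric.mem_closedBall.mpr hy'x⟩, Metric.mem_closedBall.mpr hy'z⟩
      z' ⟨⟨hz'T, Metric.mem_closedBall.mpr hz'x⟩, Metric.mem_closedBall.mpr hz'y⟩
    simp only [perim] at hm
    have e1 : dist z' w = dist w z' := dist_comm _ _
    have e2 : dist z' x' = dist x' z' := dist_comm _ _
    linarith
  · -- dist x y' = δ
    refine le_antisymm (by rw [dist_comm]; exact hy'x) (le_of_not_gt fun h => ?_)
    obtain ⟨w, hwT, hwu, hwv, hwlt⟩ :=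
      move_lemma hB hTconv hy'T hx'T h (by rw [dist_comm]; exact hy'z) (by rw [dist_comm]; exact hx'z) S3
    have hm := hmin x' ⟨⟨hx'T, Metric.mem_closedBall.mpr hx'y⟩,
      Metric.mem_closedBall.mpr hx'z⟩
      w ⟨⟨hwT, Metric.mem_closedBall.mpr (by rw [dist_comm]; exact hwu)⟩,
        Metric.mem_closedBall.mpr (by rw [dist_comm]; exact hwv)⟩
      z' ⟨⟨hz'T, Metric.mem_closedBall.mpr hz'x⟩, Metric.mem_closedBall.mpr hz'y⟩
    simp only [perim] at hm
    have e1 : dist x' w = dist w x' := dist_comm _ _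
    have e2 : dist x' y' = dist y' x' := dist_comm _ _
    have e3 : dist w z' = dist z' w := dist_comm _ _
    linarith
  · -- dist z y' = δ
    refine le_antisymm (by rw [dist_comm]; exact hy'z) (le_of_not_gt fun h => ?_)
    obtain ⟨w, hwT, hwu, hwv, hwlt⟩ :=
      move_lemma hB hTconv hy'T hz'T h (by rw [dist_comm]; exact hy'x) (by rw [dist_comm]; exact hz'x) S4
    have hm := hmin x' ⟨⟨hx'T, Metric.mem_closedBall.mpr hx'y⟩,
      Metric.mem_closedBall.mpr hx'z⟩
      w ⟨⟨hwT, Metric.mem_closedBall.mpr (by rw [dist_comm]; exact hwv)⟩,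
        Metric.mem_closedBall.mpr (by rw [dist_comm]; exact hwu)⟩
      z' ⟨⟨hz'T, Metric.mem_closedBall.mpr hz'x⟩, Metric.mem_closedBall.mpr hz'y⟩
    simp only [perim] at hm
    have e1 : dist x' w = dist w x' := dist_comm _ _
    have e2 : dist x' y' = dist y' x' := dist_comm _ _
    have e3 : dist w z' = dist z' w := dist_comm _ _
    linarith
  · -- dist x z' = δ
    refine le_antisymm (by rw [dist_comm]; exact hz'x) (le_of_not_gt fun h => ?_)
    obtain ⟨w, hwT, hwu, hwv, hwlt⟩ :=
      move_lemma hB hTconv hz'T hx'T h (by rw [dist_comm]; exact hz'y) (by rw [dist_comm]; exact hx'y) S5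
    have hm := hmin x' ⟨⟨hx'T, Metric.mem_closedBall.mpr hx'y⟩,
      Metric.mem_closedBall.mpr hx'z⟩
      y' ⟨⟨hy'T, Metric.mem_closedBall.mpr hy'x⟩, Metric.mem_closedBall.mpr hy'z⟩
      w ⟨⟨hwT, Metric.mem_closedBall.mpr (by rw [dist_comm]; exact hwu)⟩,
        Metric.mem_closedBall.mpr (by rw [dist_comm]; exact hwv)⟩
    simp only [perim] at hm
    have e1 : dist y' w = dist w y' := dist_comm _ _
    have e2 : dist y' z' = dist z' y' := dist_comm _ _
    have e3 : dist w x' = dist x' w := dist_comm _ _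
    have e4 : dist z' x' = dist x' z' := dist_comm _ _
    linarith
  · -- dist y z' = δ
    refine le_antisymm (by rw [dist_comm]; exact hz'y) (le_of_not_gt fun h => ?_)
    obtain ⟨w, hwT, hwu, hwv, hwlt⟩ :=
      move_lemma hB hTconv hz'T hy'T h (by rw [dist_comm]; exact hz'x) (by rw [dist_comm]; exact hy'x) S6
    have hm := hmin x' ⟨⟨hx'T, Metric.mem_closedBall.mpr hx'y⟩,
      Metric.mem_closedBall.mpr hx'z⟩
      y' ⟨⟨hy'T, Metric.mem_closedBall.mpr hy'x⟩, Metric.mem_closedBall.mpr hy'z⟩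
      w ⟨⟨hwT, Metric.mem_closedBall.mpr (by rw [dist_comm]; exact hwv)⟩,
        Metric.mem_closedBall.mpr (by rw [dist_comm]; exact hwu)⟩
    simp only [perim] at hm
    have e1 : dist y' w = dist w y' := dist_comm _ _
    have e2 : dist w x' = dist x' w := dist_comm _ _
    have e3 : dist z' x' = dist x' z' := dist_comm _ _
    have e4 : dist z' y' = dist y' z' := dist_comm _ _
    linarith
end
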